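/- Let G be a noncompact locally compact second countable group and let S = (S_g)_{g∈G} be a measure-preserving Borel G-action on an infinite σ-finite standard measure space (Z, κ). Let Z_1 ⊆ Z_2 ⊆ ⋯ be measurable sets of finite measure with ⋃_n Z_n = Z, and for each n let 𝒫_n be a finite partition of Z_n into measurable subsets of equal measure such that 𝒫_{n+1} refines 𝒫_n and ⋁_n 𝒫_n is dense in the ring of finite-measure sets (for every measurable B of finite measure and ε > 0 there is n and a 𝒫_n-measurable set B' with κ(B △ B') < ε). Assume that for every n and every pair of atoms A, B of 𝒫_n, there exist finitely many g_1, …, g_l ∈ G and mutually disjoint measurable subsets A_1, …, A_l of A such that the sets S_{g_1}A_1, …, S_{g_l}A_l are mutually disjoint, their union is contained in B, and κ(A_1 ∪ ⋯ ∪ A_l) > 0.1·κ(A). Then S is ergodic. -/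

import Mathlib

/-!
Suppose `A` is invariant but neither `A` nor its complement is null. Approximating both (cut down
to finite measure) by unions of atoms, and passing to a common finer level `N`, gives atoms
`A₀, B₀ ∈ P N` such that less than a twentieth of `A₀` lies outside `A` and less than a twentieth
of `B₀` lies inside `A`. The pieces of `A₀` that the hypothesis moves disjointly into `B₀` fill
more than a tenth of `A₀`. But the action preserves `κ` and `A` is invariant, so their part inside
`A` is carried into `B₀ ∩ A`, while their part outside `A` lies in `A₀ \ A`; since
`κ A₀ = κ B₀`, together they fill less than a tenth of `A₀`.
-/

open MeasureTheory Filter Topology Set ENNReal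

noncomputable section

section ActionDefs

variable {G X : Type*}

/-- A Borel action of a group `G` on a measurable space `X`. -/
def IsBorelAction [Group G] [MeasurableSpace G] [MeasurableSpace X]
    (T : G → X → X) : Prop :=
  Measurable (Function.uncurry T) ∧ (∀ x, T 1 x = x) ∧ ∀ g h x, T (g * h) x = T g (T h x)

/-- A measure-preserving Borel action. -/
def IsMPAction [Group G] [MeasurableSpace G] [MeasurableSpace X]
    (μ : Measure X) (T : G → X → X) : Prop :=
  IsBorelAction T ∧ ∀ g, MeasurePreserving (T g) μ μ

/-- A nonsingular Borel action: each `μ ∘ T g` is mutually absolutely continuous with `μ`. -/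
def IsNonsingularAction [Group G] [MeasurableSpace G] [MeasurableSpace X]
    (μ : Measure X) (T : G → X → X) : Prop :=
  IsBorelAction T ∧ ∀ g, μ.map (T g) ≪ μ ∧ μ ≪ μ.map (T g)

/-- An action is of 0-type if `μ (T g A ∩ B) → 0` as `g → ∞` along the cocompact filter,
for all sets `A`, `B` of finite measure. -/
def IsZeroType [Group G] [MeasurableSpace G] [TopologicalSpace G] [MeasurableSpace X]
    (μ : Measure X) (T : G → X → X) : Prop :=
  ∀ A B : Set X, MeasurableSet A → MeasurableSet B → μ A ≠ ∞ → μ B ≠ ∞ →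
    Tendsto (fun g : G => μ (T g '' A ∩ B)) (cocompact G) (𝓝 0)

/-- A probability-preserving action is mixing if `μ (T g A ∩ B) → μ A * μ B` as `g → ∞`. -/
def IsMixingAction [Group G] [MeasurableSpace G] [TopologicalSpace G] [MeasurableSpace X]
    (μ : Measure X) (T : G → X → X) : Prop :=
  ∀ A B : Set X, MeasurableSet A → MeasurableSet B →
    Tendsto (fun g : G => μ (T g '' A ∩ B)) (cocompact G) (𝓝 (μ A * μ B))

/-- A free action: a.e. point has trivial stabilizer. -/
def IsFreeAction [Group G] [MeasurableSpace X] (μ : Measure X) (T : G → X → X) : Prop :=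
  ∀ᵐ x ∂μ, ∀ g : G, T g x = x → g = 1

/-- A `T`-Følner sequence of sets of finite positive measure. -/
def IsFolner [Group G] [TopologicalSpace G] [MeasurableSpace X]
    (μ : Measure X) (T : G → X → X) (A : ℕ → Set X) : Prop :=
  (∀ n, MeasurableSet (A n) ∧ 0 < μ (A n) ∧ μ (A n) ≠ ∞) ∧
    ∀ K : Set G, IsCompact K →
      Tendsto (fun n => ⨆ g ∈ K, μ (symmDiff (T g '' A n) (A n)) / μ (A n)) atTop (𝓝 0)

/-- The restriction of the action to an invariant set `A` is totally dissipative: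
there is a measurable subset `W ⊆ A` meeting the orbit of a.e. point of `A` exactly once,
and a.e. point of `A` has compact stabilizer. -/
def IsTotallyDissipativeOn [Group G] [TopologicalSpace G] [MeasurableSpace X]
    (μ : Measure X) (T : G → X → X) (A : Set X) : Prop :=
  ∃ W : Set X, MeasurableSet W ∧ W ⊆ A ∧
    ∀ᵐ z ∂(μ.restrict A),
      (∃! w, w ∈ W ∧ ∃ g : G, T g z = w) ∧ IsCompact {g : G | T g z = z}

/-- A totally dissipative action. -/
def IsTotallyDissipative [Group G] [TopologicalSpace G] [MeasurableSpace X]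
    (μ : Measure X) (T : G → X → X) : Prop :=
  IsTotallyDissipativeOn μ T Set.univ

/-- The restriction of the action to the invariant set `A` is conservative: no invariant
subset of `A` of positive measure on which the action is totally dissipative. -/
def IsConservativeOn [Group G] [TopologicalSpace G] [MeasurableSpace X]
    (μ : Measure X) (T : G → X → X) (A : Set X) : Prop :=
  ¬ ∃ B : Set X, B ⊆ A ∧ MeasurableSet B ∧ 0 < μ B ∧ (∀ g : G, T g ⁻¹' B = B) ∧
      IsTotallyDissipativeOn μ T B

/-- A conservative action. -/
def IsConservativeAction [Group G] [TopologicalSpace G] [MeasurableSpace X]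
    (μ : Measure X) (T : G → X → X) : Prop :=
  IsConservativeOn μ T Set.univ

/-- An ergodic action: every a.e. invariant set is null or conull. -/
def IsErgodicAction [Group G] [MeasurableSpace X] (μ : Measure X) (T : G → X → X) : Prop :=
  ∀ A : Set X, MeasurableSet A → (∀ g : G, μ (symmDiff (T g '' A) A) = 0) →
    μ A = 0 ∨ μ Aᶜ = 0

/-- A properly ergodic action: ergodic, and the measure is not concentrated on one orbit. -/
def IsProperlyErgodic [Group G] [MeasurableSpace X] (μ : Measure X) (T : G → X → X) : Prop :=
  IsErgodicAction μ T ∧ ¬ ∃ z : X, μ {y | ∃ g : G, T g z = y}ᶜ = 0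

/-- A weakly mixing action: the product with every ergodic probability-preserving action
on a standard probability space is ergodic. -/
def IsWeaklyMixingAction [Group G] [MeasurableSpace G] [MeasurableSpace X]
    (μ : Measure X) (T : G → X → X) : Prop :=
  ∀ (Z : Type) [MeasurableSpace Z] [StandardBorelSpace Z] (κ : Measure Z)
    [IsProbabilityMeasure κ] (R : G → Z → Z),
    IsMPAction κ R → IsErgodicAction κ R →
      IsErgodicAction (μ.prod κ) (fun g p => (T g p.1, R g p.2))

/-- A sharply weak mixing action: properly ergodic, and the product with every ergodic
conservative nonsingular action on a nonatomic standard probability space is either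
ergodic or totally dissipative. -/
def IsSharplyWeakMixing [Group G] [MeasurableSpace G] [TopologicalSpace G] [MeasurableSpace X]
    (μ : Measure X) (T : G → X → X) : Prop :=
  IsProperlyErgodic μ T ∧
    ∀ (Z : Type) [MeasurableSpace Z] [StandardBorelSpace Z] (κ : Measure Z)
      [IsProbabilityMeasure κ] (R : G → Z → Z),
      (∀ z : Z, κ {z} = 0) →
      IsNonsingularAction κ R → IsErgodicAction κ R → IsConservativeAction κ R →
        (IsErgodicAction (μ.prod κ) (fun g p => (T g p.1, R g p.2)) ∨
          IsTotallyDissipative (μ.prod κ) (fun g p => (T g p.1, R g p.2)))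

end ActionDefs

/-- A witness for the Haagerup property: a weakly continuous unitary representation of `G`
on a separable complex Hilbert space whose matrix coefficients vanish at infinity and which
has almost-invariant unit vectors. -/
structure HaagerupWitness (G : Type*) [Group G] [TopologicalSpace G] where
  (E : Type)
  [nacg : NormedAddCommGroup E]
  [ips : InnerProductSpace ℂ E]
  [cs : CompleteSpace E]
  [sct : SecondCountableTopology E]
  (V : G →* (E ≃ₗᵢ[ℂ] E))
  (weak_cont : ∀ ξ η : E, Continuous fun g : G => (inner ℂ (V g ξ) η : ℂ))
  (c0 : ∀ ξ η : E, Tendsto (fun g : G => (inner ℂ (V g ξ) η : ℂ)) (cocompact G) (𝓝 0))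
  (almost_inv : ∀ ε : ℝ, 0 < ε → ∀ K : Set G, IsCompact K →
    ∃ ξ : E, ‖ξ‖ = 1 ∧ ∀ g ∈ K, ‖V g ξ - ξ‖ < ε)

/-- The Haagerup property for a topological group `G`. -/
def HasHaagerupProperty (G : Type*) [Group G] [TopologicalSpace G] : Prop :=
  Nonempty (HaagerupWitness G)

/-- Property (T) for the pair `H ⊆ G`: every weakly continuous unitary representation of `G`
on a separable complex Hilbert space with almost-invariant unit vectors has a nonzero
`H`-invariant vector. -/
def HasPropertyTPair (G : Type*) [Group G] [TopologicalSpace G] (H : Subgroup G) : Prop :=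
  ∀ (E : Type) [NormedAddCommGroup E] [InnerProductSpace ℂ E] [CompleteSpace E]
    [SecondCountableTopology E] (V : G →* (E ≃ₗᵢ[ℂ] E)),
    (∀ ξ η : E, Continuous fun g : G => (inner ℂ (V g ξ) η : ℂ)) →
    (∀ ε : ℝ, 0 < ε → ∀ K : Set G, IsCompact K →
      ∃ ξ : E, ‖ξ‖ = 1 ∧ ∀ g ∈ K, ‖V g ξ - ξ‖ < ε) →
    ∃ η : E, η ≠ 0 ∧ ∀ h ∈ H, V h η = η

/-- The squared Hellinger distance of two measures `α`, `β` with respect to a reference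
measure `γ`. -/
def hellingerSq {Y : Type*} [MeasurableSpace Y] (γ α β : Measure Y) : ℝ :=
  (1 / 2) * ∫ y, (Real.sqrt (α.rnDeriv γ y).toReal - Real.sqrt (β.rnDeriv γ y).toReal) ^ 2 ∂γ

/-- The tail cylinder `𝐁ⁿ = Yⁿ × B n × B (n+1) × ⋯` (with `0`-based indexing): the set of
sequences whose `j`-th coordinate lies in `B j` for every `j ≥ n`. -/
def tailCylinder {Y : Type*} (B : ℕ → Set Y) (n : ℕ) : Set (ℕ → Y) :=
  {x : ℕ → Y | ∀ j, n ≤ j → x j ∈ B j}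

open Function

section Action

variable {G X : Type*} [Group G] [MeasurableSpace G] [MeasurableSpace X] {T : G → X → X}
  {μ : Measure X}

theorem IsBorelAction.image_eq_preimage_inv (hT : IsBorelAction T) (g : G) (s : Set X) :
    T g '' s = T g⁻¹ ⁻¹' s := by
  refine congrFun (image_eq_preimage_of_inverse (fun x => ?_) (fun x => ?_)) s
  · rw [← hT.2.2, inv_mul_cancel, hT.2.1]
  · rw [← hT.2.2, mul_inv_cancel, hT.2.1]

theorem IsBorelAction.measurableSet_image (hT : IsBorelAction T) (g : G) {s : Set X}
    (hs : MeasurableSet s) : MeasurableSet (T g '' s) := by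
  rw [hT.image_eq_preimage_inv]
  exact hT.1.comp measurable_prodMk_left hs

theorem IsMPAction.measure_image (hT : IsMPAction μ T) (g : G) {s : Set X}
    (hs : MeasurableSet s) : μ (T g '' s) = μ s := by
  rw [hT.1.image_eq_preimage_inv]
  exact (hT.2 g⁻¹).measure_preimage hs.nullMeasurableSet

theorem IsMPAction.measure_iUnion_image {ι : Type*} [Countable ι] (hT : IsMPAction μ T)
    (g : ι → G) {s : ι → Set X} (hs : ∀ i, MeasurableSet (s i))
    (hs_disj : Pairwise (Disjoint on s))
    (himg_disj : Pairwise (Disjoint on fun i => T (g i) '' s i)) :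
    μ (⋃ i, T (g i) '' s i) = μ (⋃ i, s i) := by
  rw [measure_iUnion himg_disj fun i => hT.1.measurableSet_image _ (hs i),
    measure_iUnion hs_disj hs]
  exact tsum_congr fun i => hT.measure_image _ (hs i)

theorem IsMPAction.measure_iUnion_le_of_invariant {ι : Type*} [Countable ι] (hT : IsMPAction μ T)
    {A A₀ B₀ : Set X} (hA : MeasurableSet A) (hA_inv : ∀ g, μ (symmDiff (T g '' A) A) = 0)
    (g : ι → G) {s : ι → Set X} (hs : ∀ i, MeasurableSet (s i))
    (hs_disj : Pairwise (Disjoint on s))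
    (himg_disj : Pairwise (Disjoint on fun i => T (g i) '' s i))
    (hs_sub : ∀ i, s i ⊆ A₀) (himg_sub : ⋃ i, T (g i) '' s i ⊆ B₀) :
    μ (⋃ i, s i) ≤ μ (B₀ ∩ A) + μ (A₀ \ A) := by
  have hA_ae : ⋃ i, T (g i) '' (s i ∩ A) ≤ᵐ[μ] A := by
    have h : ∀ i, T (g i) '' (s i ∩ A) ≤ᵐ[μ] A := fun i =>
      (image_mono inter_subset_right).eventuallyLE.trans
        (ae_le_set.2 (measure_mono_null subset_union_left (hA_inv (g i))))
    exact (Filter.EventuallyLE.countable_iUnion h).trans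
      (iUnion_subset fun _ => subset_rfl).eventuallyLE
  have himg_ae : ⋃ i, T (g i) '' (s i ∩ A) ≤ᵐ[μ] (B₀ ∩ A : Set X) := by
    have hB₀ : ⋃ i, T (g i) '' (s i ∩ A) ⊆ B₀ :=
      (iUnion_mono fun i => image_mono inter_subset_left).trans himg_sub
    simpa only [inter_self] using ae_le_set_inter hB₀.eventuallyLE hA_ae
  calc μ (⋃ i, s i) = μ (⋃ i, s i ∩ A) + μ ((⋃ i, s i) \ A) := by
        rw [← iUnion_inter, measure_inter_add_sdiff _ hA]
    _ = μ (⋃ i, T (g i) '' (s i ∩ A)) + μ ((⋃ i, s i) \ A) := by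
        rw [hT.measure_iUnion_image g (fun i => (hs i).inter hA)
          (fun i j hij => (hs_disj hij).mono inter_subset_left inter_subset_left)
          (fun i j hij => (himg_disj hij).mono (image_mono inter_subset_left)
            (image_mono inter_subset_left))]
    _ ≤ μ (B₀ ∩ A) + μ (A₀ \ A) :=
        add_le_add (measure_mono_ae himg_ae)
          (measure_mono (sdiff_subset_sdiff_left (iUnion_subset hs_sub)))

end Action

section Measure

variable {X : Type*} [MeasurableSpace X] {μ : Measure X}

theorem exists_mul_measure_sdiff_lt_of_sUnion {t : Finset (Set X)}
    (ht : ∀ C ∈ t, MeasurableSet C) (ht_disj : (↑t : Set (Set X)).PairwiseDisjoint id)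
    {E : Set X} (hE : MeasurableSet E) {c : ℝ≥0∞}
    (h : c * μ (⋃₀ ↑t \ E) < μ (⋃₀ ↑t)) : ∃ C ∈ t, c * μ (C \ E) < μ C := by
  by_contra! hle
  refine h.not_ge ?_
  have hdiff : ⋃₀ (↑t : Set (Set X)) \ E = ⋃ C ∈ t, C \ E := by
    simp only [sUnion_eq_biUnion, Finset.mem_coe, iUnion_sdiff]
  calc μ (⋃₀ ↑t) = ∑ C ∈ t, μ C := by
        rw [sUnion_eq_biUnion, Finset.set_biUnion_coe]
        exact measure_biUnion_finset ht_disj ht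
    _ ≤ ∑ C ∈ t, c * μ (C \ E) := Finset.sum_le_sum hle
    _ = c * μ (⋃₀ ↑t \ E) := by
        rw [hdiff, measure_biUnion_finset (f := (· \ E))
          (fun C hC D hD hCD => (ht_disj hC hD hCD).mono sdiff_subset sdiff_subset)
          (fun C hC => (ht C hC).diff hE), Finset.mul_sum]

theorem mul_measure_sdiff_lt_of_mul_measure_symmDiff_lt {E U : Set X}
    (h : 21 * μ (symmDiff E U) < μ E) : 20 * μ (U \ E) < μ U := by
  by_contra! hle
  refine h.not_ge ?_
  calc μ E ≤ μ (E ∩ U) + μ (E \ U) := measure_le_inter_add_sdiff μ E U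
    _ ≤ μ U + μ (E \ U) := by gcongr; exact inter_subset_right
    _ ≤ 20 * μ (symmDiff E U) + μ (symmDiff E U) := by
        gcongr
        · exact hle.trans (by gcongr; exact subset_union_right)
        · exact subset_union_left
    _ = 21 * μ (symmDiff E U) := by ring

end Measure

structure IsRefiningPartitionSeq {X : Type*} (Zn : ℕ → Set X) (P : ℕ → Finset (Set X)) : Prop where
  mono : Monotone Zn
  disjoint : ∀ n, ∀ A ∈ P n, ∀ B ∈ P n, A ≠ B → Disjoint A B
  sUnion_eq : ∀ n, ⋃₀ (↑(P n) : Set (Set X)) = Zn n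
  refines : ∀ n, ∀ A ∈ P (n + 1), ∀ B ∈ P n, A ⊆ B ∨ Disjoint A B

namespace IsRefiningPartitionSeq

variable {X : Type*} {Zn : ℕ → Set X} {P : ℕ → Finset (Set X)}

theorem subset_of_mem (hP : IsRefiningPartitionSeq Zn P) {n : ℕ} {D : Set X} (hD : D ∈ P n) :
    D ⊆ Zn n :=
  hP.sUnion_eq n ▸ subset_sUnion_of_mem hD

theorem exists_mem_of_mem (hP : IsRefiningPartitionSeq Zn P) {n : ℕ} {x : X} (hx : x ∈ Zn n) :
    ∃ C ∈ P n, x ∈ C := by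
  rwa [← hP.sUnion_eq n] at hx

theorem subset_of_not_disjoint (hP : IsRefiningPartitionSeq Zn P) {n N : ℕ} (hnN : n ≤ N)
    {C D : Set X} (hC : C ∈ P N) (hD : D ∈ P n) (hCD : ¬Disjoint C D) : C ⊆ D := by
  induction N, hnN using Nat.le_induction generalizing C with
  | base =>
    by_cases h : C = D
    · exact h.le
    · exact absurd (hP.disjoint n C hC D hD h) hCD
  | succ N hnN ih =>
    obtain ⟨x, hxC, hxD⟩ := not_disjoint_iff.1 hCD
    obtain ⟨D', hD', hxD'⟩ := hP.exists_mem_of_mem (hP.mono hnN (hP.subset_of_mem hD hxD))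
    have hCD' : C ⊆ D' := (hP.refines N C hC D' hD').resolve_right
      (not_disjoint_iff.2 ⟨x, hxC, hxD'⟩)
    exact hCD'.trans (ih hD' (not_disjoint_iff.2 ⟨x, hxD', hxD⟩))

theorem exists_sUnion_eq_of_le (hP : IsRefiningPartitionSeq Zn P) {n N : ℕ} (hnN : n ≤ N)
    {s : Finset (Set X)} (hs : s ⊆ P n) :
    ∃ t ⊆ P N, ⋃₀ (↑t : Set (Set X)) = ⋃₀ (↑s : Set (Set X)) := by
  classical
  refine ⟨(P N).filter (· ⊆ ⋃₀ ↑s), Finset.filter_subset _ _, ?_⟩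
  refine (sUnion_subset fun C hC => (Finset.mem_filter.1 hC).2).antisymm ?_
  rintro x ⟨D, hD, hxD⟩
  obtain ⟨C, hC, hxC⟩ := hP.exists_mem_of_mem (hP.mono hnN (hP.subset_of_mem (hs hD) hxD))
  have hCD : C ⊆ D :=
    hP.subset_of_not_disjoint hnN hC (hs hD) (not_disjoint_iff.2 ⟨x, hxC, hxD⟩)
  exact ⟨C, Finset.mem_filter.2 ⟨hC, hCD.trans (subset_sUnion_of_mem hD)⟩, hxC⟩

section Measure

variable [MeasurableSpace X] {μ : Measure X}

theorem eventually_exists_mul_measure_sdiff_lt_of_ne_top (hP : IsRefiningPartitionSeq Zn P)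
    (hPm : ∀ n, ∀ A ∈ P n, MeasurableSet A)
    (hPdense : ∀ B : Set X, MeasurableSet B → μ B ≠ ∞ → ∀ ε : ℝ≥0∞, 0 < ε →
      ∃ n, ∃ s ⊆ P n, μ (symmDiff B (⋃₀ (↑s : Set (Set X)))) < ε)
    {E : Set X} (hE : MeasurableSet E) (hE0 : μ E ≠ 0) (hE_top : μ E ≠ ∞) :
    ∀ᶠ N in atTop, ∃ C ∈ P N, 20 * μ (C \ E) < μ C := by
  obtain ⟨n, s, hs, hsE⟩ := hPdense E hE hE_top (μ E / 21) (ENNReal.div_pos hE0 (by norm_num))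
  filter_upwards [eventually_ge_atTop n] with N hnN
  obtain ⟨t, ht, htU⟩ := hP.exists_sUnion_eq_of_le hnN hs
  have htE : 21 * μ (symmDiff E (⋃₀ ↑t)) < μ E := by
    rw [htU, mul_comm]
    exact (ENNReal.lt_div_iff_mul_lt (Or.inl (by norm_num)) (Or.inl (by norm_num))).1 hsE
  obtain ⟨C, hC, hCE⟩ := exists_mul_measure_sdiff_lt_of_sUnion (fun C hC => hPm N C (ht hC))
    (fun C hC D hD => hP.disjoint N C (ht hC) D (ht hD)) hE
    (mul_measure_sdiff_lt_of_mul_measure_symmDiff_lt htE)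
  exact ⟨C, ht hC, hCE⟩

theorem eventually_exists_mul_measure_sdiff_lt (hP : IsRefiningPartitionSeq Zn P)
    (hZm : ∀ n, MeasurableSet (Zn n)) (hZfin : ∀ n, μ (Zn n) ≠ ∞) (hZU : ⋃ n, Zn n = univ)
    (hPm : ∀ n, ∀ A ∈ P n, MeasurableSet A)
    (hPdense : ∀ B : Set X, MeasurableSet B → μ B ≠ ∞ → ∀ ε : ℝ≥0∞, 0 < ε →
      ∃ n, ∃ s ⊆ P n, μ (symmDiff B (⋃₀ (↑s : Set (Set X)))) < ε)
    {E : Set X} (hE : MeasurableSet E) (hE0 : μ E ≠ 0) :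
    ∀ᶠ N in atTop, ∃ C ∈ P N, 20 * μ (C \ E) < μ C := by
  obtain ⟨n, hn⟩ : ∃ n, μ (E ∩ Zn n) ≠ 0 := by
    by_contra! h
    rw [← inter_univ E, ← hZU, inter_iUnion] at hE0
    exact hE0 (measure_iUnion_null h)
  filter_upwards [hP.eventually_exists_mul_measure_sdiff_lt_of_ne_top hPm hPdense
    (hE.inter (hZm n)) hn (ne_top_of_le_ne_top (hZfin n) (measure_mono inter_subset_right))]
    with N ⟨C, hC, hCE⟩
  exact ⟨C, hC, lt_of_le_of_lt (by gcongr; exact inter_subset_left) hCE⟩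

end Measure

end IsRefiningPartitionSeq

theorem ergodic_of_partitions_general {G : Type*} [Group G]
    [MeasurableSpace G]
    {Z : Type*} [MeasurableSpace Z]
    (κ : Measure Z)
    (S : G → Z → Z) (hS : IsMPAction κ S)
    (Zn : ℕ → Set Z) (hZmono : Monotone Zn) (hZm : ∀ n, MeasurableSet (Zn n))
    (hZfin : ∀ n, κ (Zn n) ≠ ∞) (hZU : (⋃ n, Zn n) = Set.univ)
    (P : ℕ → Finset (Set Z))
    (hPm : ∀ n, ∀ A ∈ P n, MeasurableSet A)
    (hPdisj : ∀ n, ∀ A ∈ P n, ∀ B ∈ P n, A ≠ B → Disjoint A B)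
    (hPcover : ∀ n, ⋃₀ (↑(P n) : Set (Set Z)) = Zn n)
    (hPeq : ∀ n, ∀ A ∈ P n, ∀ B ∈ P n, κ A = κ B)
    (hPrefine : ∀ n, ∀ A ∈ P (n + 1), ∀ B ∈ P n, A ⊆ B ∨ Disjoint A B)
    (hPdense : ∀ B : Set Z, MeasurableSet B → κ B ≠ ∞ → ∀ ε : ℝ≥0∞, 0 < ε →
      ∃ n, ∃ s ⊆ P n, κ (symmDiff B (⋃₀ (↑s : Set (Set Z)))) < ε)
    (hmain : ∀ n, ∀ A ∈ P n, ∀ B ∈ P n,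
      ∃ (l : ℕ) (g : Fin l → G) (As : Fin l → Set Z),
        (∀ i, MeasurableSet (As i)) ∧ (∀ i, As i ⊆ A) ∧
        (∀ i j, i ≠ j → Disjoint (As i) (As j)) ∧
        (∀ i j, i ≠ j → Disjoint (S (g i) '' As i) (S (g j) '' As j)) ∧
        (⋃ i, S (g i) '' As i) ⊆ B ∧
        κ A / 10 < κ (⋃ i, As i)) :
    IsErgodicAction κ S := by
  have hP : IsRefiningPartitionSeq Zn P := ⟨hZmono, hPdisj, hPcover, hPrefine⟩
  intro A hA hA_inv
  by_contra! hA0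
  obtain ⟨N, ⟨A₀, hA₀, hA₀A⟩, B₀, hB₀, hB₀A⟩ :=
    ((hP.eventually_exists_mul_measure_sdiff_lt hZm hZfin hZU hPm hPdense hA hA0.1).and
      (hP.eventually_exists_mul_measure_sdiff_lt hZm hZfin hZU hPm hPdense hA.compl hA0.2)).exists
  rw [sdiff_compl, hPeq N B₀ hB₀ A₀ hA₀] at hB₀A
  obtain ⟨l, g, As, hAs, hAsA₀, hAs_disj, himg_disj, himgB₀, hAs_large⟩ :=
    hmain N A₀ hA₀ B₀ hB₀
  have hAs_small := hS.measure_iUnion_le_of_invariant hA hA_inv g hAs (fun i j => hAs_disj i j)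
    (fun i j => himg_disj i j) hAsA₀ himgB₀
  have hA₀_lt : κ A₀ < 10 * κ (⋃ i, As i) := by
    rwa [mul_comm, ← ENNReal.div_lt_iff (Or.inl (by norm_num)) (Or.inl (by norm_num))]
  refine lt_irrefl (20 * κ (⋃ i, As i)) ?_
  calc 20 * κ (⋃ i, As i) ≤ 20 * κ (B₀ ∩ A) + 20 * κ (A₀ \ A) := by
        rw [← mul_add]; gcongr
    _ < κ A₀ + κ A₀ := ENNReal.add_lt_add hB₀A hA₀A
    _ = 2 * κ A₀ := (two_mul _).symm
    _ < 2 * (10 * κ (⋃ i, As i)) := by gcongr; norm_num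
    _ = 20 * κ (⋃ i, As i) := by rw [← mul_assoc]; norm_num

/-- **Proposition 2.1(ii).** An ergodicity criterion for measure-preserving actions in terms
of a refining dense sequence of finite partitions into sets of equal measure: if more than a
tenth (in measure) of every atom can be moved disjointly into any other given atom of the same
partition by finitely many group elements, then the action is ergodic. -/
theorem ergodic_of_partitions {G : Type*} [Group G]
    [TopologicalSpace G] [IsTopologicalGroup G] [LocallyCompactSpace G]
    [SecondCountableTopology G] [NoncompactSpace G] [MeasurableSpace G] [BorelSpace G]
    {Z : Type*} [MeasurableSpace Z] [StandardBorelSpace Z]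
    (κ : Measure Z) [SigmaFinite κ] (hinf : κ Set.univ = ∞)
    (S : G → Z → Z) (hS : IsMPAction κ S)
    (Zn : ℕ → Set Z) (hZmono : Monotone Zn) (hZm : ∀ n, MeasurableSet (Zn n))
    (hZfin : ∀ n, κ (Zn n) ≠ ∞) (hZU : (⋃ n, Zn n) = Set.univ)
    (P : ℕ → Finset (Set Z))
    (hPm : ∀ n, ∀ A ∈ P n, MeasurableSet A)
    (hPdisj : ∀ n, ∀ A ∈ P n, ∀ B ∈ P n, A ≠ B → Disjoint A B)
    (hPcover : ∀ n, ⋃₀ (↑(P n) : Set (Set Z)) = Zn n)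
    (hPeq : ∀ n, ∀ A ∈ P n, ∀ B ∈ P n, κ A = κ B)
    (hPrefine : ∀ n, ∀ A ∈ P (n + 1), ∀ B ∈ P n, A ⊆ B ∨ Disjoint A B)
    (hPdense : ∀ B : Set Z, MeasurableSet B → κ B ≠ ∞ → ∀ ε : ℝ≥0∞, 0 < ε →
      ∃ n, ∃ s ⊆ P n, κ (symmDiff B (⋃₀ (↑s : Set (Set Z)))) < ε)
    (hmain : ∀ n, ∀ A ∈ P n, ∀ B ∈ P n,
      ∃ (l : ℕ) (g : Fin l → G) (As : Fin l → Set Z),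
        (∀ i, MeasurableSet (As i)) ∧ (∀ i, As i ⊆ A) ∧
        (∀ i j, i ≠ j → Disjoint (As i) (As j)) ∧
        (∀ i j, i ≠ j → Disjoint (S (g i) '' As i) (S (g j) '' As j)) ∧
        (⋃ i, S (g i) '' As i) ⊆ B ∧
        κ A / 10 < κ (⋃ i, As i)) :
    IsErgodicAction κ S :=
  ergodic_of_partitions_general κ S hS Zn hZmono hZm hZfin hZU P hPm hPdisj hPcover hPeq hPrefine
    hPdense hmain
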